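/- arXiv:2506.08265 — 2 statements merged into one kernel-verified Lean document; each statement's English description precedes it below -/
import Mathlib

section
/- For N ≥ 2, k ∈ {1,...,N-1}, and complex x with |x| < 1, letting ζ_N = e^{2πi/N}: log((x ζ_N^k; x)_∞ / (x ζ_N^{-k}; x)_∞) = -2i ∑_{n≥1} x^n ∑_{d|n} (1/d) sin(2πkd/N), where the divisor sum runs over positive divisors d of n. -/
/-!
Expanding every factor by `-log (1 - z) = ∑_{ℓ ≥ 1} z^ℓ / ℓ` turns
`-∑_{m ≥ 1} log (1 - a x^m)`, for `‖a‖ ≤ 1`, into the absolutely convergent double series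
`∑_{m, ℓ ≥ 1} a^ℓ x^{mℓ} / ℓ`. Grouping its terms by `n = mℓ` gives the Lambert-type series
`∑_{n ≥ 1} x^n ∑_{d ∣ n} a^d / d`. For `a = e^{∓iθ}` the two divisor sums differ by
`-2i ∑_{d ∣ n} sin (dθ) / d`.
-/

open Complex Finset

lemma hasSum_pnat_taylorSeries_neg_log {z : ℂ} (hz : ‖z‖ < 1) :
    HasSum (fun ℓ : ℕ+ => z ^ (ℓ : ℕ) / ℓ) (-log (1 - z)) := by
  rw [hasSum_pnat_iff_hasSum_succ (f := fun ℓ : ℕ => z ^ ℓ / ℓ)]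
  exact_mod_cast hasSum_taylorSeries_neg_log' hz

section Lambert

variable {a x : ℂ}

lemma norm_mul_pow_lt_one (ha : ‖a‖ ≤ 1) (hx : ‖x‖ < 1) {m : ℕ} (hm : m ≠ 0) :
    ‖a * x ^ m‖ < 1 := by
  rw [norm_mul, norm_pow]
  exact (mul_le_of_le_one_left (by positivity) ha).trans_lt (pow_lt_one₀ (norm_nonneg x) hx hm)

lemma norm_mul_pow_pow_div_le (ha : ‖a‖ ≤ 1) (m ℓ : ℕ+) :
    ‖(a * x ^ (m : ℕ)) ^ (ℓ : ℕ) / ℓ‖ ≤ ‖x‖ ^ (m * ℓ : ℕ) := by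
  have hℓ : (1 : ℝ) ≤ ‖((ℓ : ℕ) : ℂ)‖ := by
    rw [norm_natCast]
    exact Nat.one_le_cast.mpr ℓ.pos
  rw [norm_div, mul_pow, ← pow_mul, norm_mul, norm_pow, norm_pow]
  exact (div_le_self (by positivity) hℓ).trans
    (mul_le_of_le_one_left (by positivity) (pow_le_one₀ (norm_nonneg a) ha))

lemma summable_mul_pow_pow_div (ha : ‖a‖ ≤ 1) (hx : ‖x‖ < 1) :
    Summable fun c : ℕ+ × ℕ+ => (a * x ^ (c.1 : ℕ)) ^ (c.2 : ℕ) / c.2 := by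
  have hr : ‖‖x‖‖ < 1 := by rwa [norm_norm]
  have hbound : Summable fun c : ℕ+ × ℕ+ => ‖x‖ ^ (c.1 * c.2 : ℕ) := by
    simpa only [pow_zero, one_mul] using summable_prod_mul_pow 0 hr
  exact hbound.of_norm_bounded fun c => norm_mul_pow_pow_div_le ha c.1 c.2

lemma sum_divisorsAntidiagonal_mul_pow_pow_div (n : ℕ) :
    ∑ p ∈ n.divisorsAntidiagonal, (a * x ^ p.1) ^ p.2 / (p.2 : ℂ)
      = x ^ n * ∑ d ∈ n.divisors, a ^ d / d := by
  rw [Nat.sum_divisorsAntidiagonal' (fun m ℓ => (a * x ^ m) ^ ℓ / (ℓ : ℂ)), mul_sum]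
  refine sum_congr rfl fun d hd => ?_
  rw [mul_pow, ← pow_mul, Nat.div_mul_cancel (Nat.dvd_of_mem_divisors hd)]
  ring

lemma hasSum_pow_mul_sum_divisors_pow_div (ha : ‖a‖ ≤ 1) (hx : ‖x‖ < 1) :
    HasSum (fun n : ℕ+ => x ^ (n : ℕ) * ∑ d ∈ (n : ℕ).divisors, a ^ d / d)
      (∑' c : ℕ+ × ℕ+, (a * x ^ (c.1 : ℕ)) ^ (c.2 : ℕ) / c.2) := by
  refine (sigmaAntidiagonalEquivProd.hasSum_iff.mpr
    (summable_mul_pow_pow_div ha hx).hasSum).sigma fun n => ?_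
  convert hasSum_fintype _
  rw [← sum_divisorsAntidiagonal_mul_pow_pow_div, ← sum_attach]
  rfl

theorem hasSum_neg_log_one_sub_mul_pow (ha : ‖a‖ ≤ 1) (hx : ‖x‖ < 1) :
    HasSum (fun m : ℕ+ => -log (1 - a * x ^ (m : ℕ)))
      (∑' n : ℕ+, x ^ (n : ℕ) * ∑ d ∈ (n : ℕ).divisors, a ^ d / d) := by
  rw [(hasSum_pow_mul_sum_divisors_pow_div ha hx).tsum_eq]
  exact (summable_mul_pow_pow_div ha hx).hasSum.prod_fiberwise fun m =>
    hasSum_pnat_taylorSeries_neg_log (z := a * x ^ (m : ℕ)) (norm_mul_pow_lt_one ha hx m.ne_zero)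

end Lambert

lemma exp_neg_mul_I_pow_sub_exp_mul_I_pow (z : ℂ) (d : ℕ) :
    exp (-(z * I)) ^ d - exp (z * I) ^ d = -2 * I * sin (d * z) := by
  rw [← exp_nat_mul, ← exp_nat_mul, Complex.sin]
  ring_nf
  rw [I_sq]
  ring_nf

lemma pow_mul_sum_divisors_exp_neg_mul_I_sub (z x : ℂ) (n : ℕ) :
    x ^ n * ∑ d ∈ n.divisors, exp (-(z * I)) ^ d / d - x ^ n * ∑ d ∈ n.divisors, exp (z * I) ^ d / d
      = -2 * I * (x ^ n * ∑ d ∈ n.divisors, 1 / (d : ℂ) * sin (d * z)) := by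
  rw [← mul_sub, ← sum_sub_distrib, mul_sum, mul_sum, mul_sum]
  refine sum_congr rfl fun d _ => ?_
  linear_combination (x ^ n / d) * exp_neg_mul_I_pow_sub_exp_mul_I_pow z d

theorem log_ratio_qPochhammer_root_of_unity_general (N k : ℕ) (x : ℂ) (hx : ‖x‖ < 1) :
    (∑' j : ℕ,
        (Complex.log (1 - Complex.exp (2 * (Real.pi : ℂ) * Complex.I * (k : ℂ) / (N : ℂ))
            * x ^ (j + 1)) -
         Complex.log (1 - Complex.exp (-(2 * (Real.pi : ℂ) * Complex.I * (k : ℂ) / (N : ℂ)))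
            * x ^ (j + 1))))
      = -2 * Complex.I * ∑' n : ℕ+,
          x ^ (n : ℕ) * ∑ d ∈ (n : ℕ).divisors,
            (1 / (d : ℂ)) * (Real.sin (2 * Real.pi * k * d / N) : ℂ) := by
  set θ : ℝ := 2 * Real.pi * k / N with hθ
  have hθI : 2 * (Real.pi : ℂ) * I * k / N = θ * I := by rw [hθ]; push_cast; ring
  have hsin (d : ℕ) : sin (d * θ) = (Real.sin (2 * Real.pi * k * d / N) : ℂ) := by
    rw [ofReal_sin, hθ]; push_cast; ring_nf
  have hζ : ‖exp (θ * I)‖ ≤ 1 := (norm_exp_ofReal_mul_I θ).le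
  have hζ' : ‖exp (-(θ * I))‖ ≤ 1 := by
    rw [← neg_mul, ← ofReal_neg]
    exact (norm_exp_ofReal_mul_I _).le
  have hsum := (hasSum_neg_log_one_sub_mul_pow hζ' hx).sub (hasSum_neg_log_one_sub_mul_pow hζ hx)
  rw [← (hasSum_pow_mul_sum_divisors_pow_div hζ' hx).summable.tsum_sub
    (hasSum_pow_mul_sum_divisors_pow_div hζ hx).summable] at hsum
  set ζ := exp (θ * I)
  set ζ' := exp (-(θ * I))
  calc _ = ∑' m : ℕ+, (-log (1 - ζ' * x ^ (m : ℕ)) - -log (1 - ζ * x ^ (m : ℕ))) := by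
        rw [hθI,
          tsum_pnat_eq_tsum_succ (f := fun m => -log (1 - ζ' * x ^ m) - -log (1 - ζ * x ^ m))]
        exact tsum_congr fun j => by ring
    _ = _ := hsum.tsum_eq
    _ = _ := tsum_congr fun n => pow_mul_sum_divisors_exp_neg_mul_I_sub θ x n
    _ = _ := by simp only [hsin, tsum_mul_left]

/-- For `N ≥ 2`, `k ∈ {1,…,N-1}` and `|x| < 1`, with `ζ_N = e^{2πi/N}`:
`log((x ζ_N^k; x)_∞ / (x ζ_N^{-k}; x)_∞) = -2i ∑_{n≥1} x^n ∑_{d|n} (1/d) sin(2πkd/N)`,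
the logarithm being taken termwise over the factors of the infinite products. -/
theorem log_ratio_qPochhammer_root_of_unity (N k : ℕ) (hN : 2 ≤ N)
    (hk : k ∈ Finset.Icc 1 (N - 1)) (x : ℂ) (hx : ‖x‖ < 1) :
    (∑' j : ℕ,
        (Complex.log (1 - Complex.exp (2 * (Real.pi : ℂ) * Complex.I * (k : ℂ) / (N : ℂ))
            * x ^ (j + 1)) -
         Complex.log (1 - Complex.exp (-(2 * (Real.pi : ℂ) * Complex.I * (k : ℂ) / (N : ℂ)))
            * x ^ (j + 1))))
      = -2 * Complex.I * ∑' n : ℕ+,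
          x ^ (n : ℕ) * ∑ d ∈ (n : ℕ).divisors,
            (1 / (d : ℂ)) * (Real.sin (2 * Real.pi * k * d / N) : ℂ) :=
  log_ratio_qPochhammer_root_of_unity_general N k x hx
end

section
/- For every positive integer n and the non-principal character χ_4 modulo 4, the sum ∑_{d|n} χ_4(d)/d over positive divisors d of n is a positive rational number. -/
/-!
Since `d ↦ χ₄(d)/d` is multiplicative, the divisor sum factors over the prime powers `p ^ k ∥ n`
into geometric sums `∑_{i ≤ k} x^i` with ratio `x = χ₄(p)/p`. Each ratio satisfies `x > -1`
(as `|χ₄(p)| ≤ 1 < p`), and a geometric sum with ratio `> -1` is positive.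
-/

open Finset ArithmeticFunction

def chiFour (d : ℕ) : ℚ :=
  if d % 4 = 1 then 1 else if d % 4 = 3 then -1 else 0

theorem ArithmeticFunction.IsMultiplicative.sum_divisors_eq_prod {R : Type*} [CommSemiring R]
    {f : ArithmeticFunction R} (hf : f.IsMultiplicative) {n : ℕ} (hn : n ≠ 0) :
    ∑ d ∈ n.divisors, f d =
      ∏ p ∈ n.primeFactors, ∑ i ∈ range (n.factorization p + 1), f (p ^ i) := by
  rw [← coe_zeta_mul_apply, (isMultiplicative_zeta.natCast.mul hf).multiplicative_factorization _ hn]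
  exact prod_congr n.support_factorization fun p hp => by
    dsimp only
    rw [coe_zeta_mul_apply, Nat.sum_divisors_prime_pow (Nat.prime_of_mem_primeFactors hp)]

theorem chiFour_eq_χ₄ (d : ℕ) : chiFour d = ZMod.χ₄ d := by
  rw [ZMod.χ₄_nat_eq_if_mod_four, chiFour]
  split_ifs <;> first | omega | simp

theorem chiFour_mul (m n : ℕ) : chiFour (m * n) = chiFour m * chiFour n := by
  simp only [chiFour_eq_χ₄, Nat.cast_mul, map_mul, Int.cast_mul]

theorem chiFour_pow (d i : ℕ) : chiFour (d ^ i) = chiFour d ^ i := by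
  simp only [chiFour_eq_χ₄, Nat.cast_pow, map_pow, Int.cast_pow]

theorem neg_one_lt_chiFour_div (d : ℕ) : -1 < chiFour d / d := by
  unfold chiFour
  split_ifs with h1 h3
  · exact neg_one_lt_zero.trans_le (by positivity)
  · have hd : (3 : ℚ) ≤ d := by exact_mod_cast (by omega : 3 ≤ d)
    rw [neg_div, neg_lt_neg_iff, div_lt_one (by linarith)]
    linarith
  · simp

def chiFourDiv : ArithmeticFunction ℚ :=
  ⟨fun d => chiFour d / d, by simp [chiFour]⟩

theorem chiFourDiv_apply (d : ℕ) : chiFourDiv d = chiFour d / d := rfl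

theorem chiFourDiv_pow (d i : ℕ) : chiFourDiv (d ^ i) = chiFourDiv d ^ i := by
  rw [chiFourDiv_apply, chiFourDiv_apply, chiFour_pow, Nat.cast_pow, div_pow]

theorem isMultiplicative_chiFourDiv : chiFourDiv.IsMultiplicative := by
  refine ⟨by simp [chiFourDiv_apply, chiFour], fun {m n} _ => ?_⟩
  rw [chiFourDiv_apply, chiFourDiv_apply, chiFourDiv_apply, chiFour_mul, Nat.cast_mul,
    div_mul_div_comm]

/-- For every positive integer `n`, the divisor sum `∑_{d|n} χ₄(d)/d` is a
positive rational number. -/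
theorem chiFour_divisor_sum_pos (n : ℕ) (hn : 0 < n) :
    0 < ∑ d ∈ n.divisors, chiFour d / (d : ℚ) := by
  change 0 < ∑ d ∈ n.divisors, chiFourDiv d
  rw [isMultiplicative_chiFourDiv.sum_divisors_eq_prod hn.ne']
  refine prod_pos fun p _ => ?_
  simp only [chiFourDiv_pow]
  exact (geom_sum_pos_iff (Nat.succ_ne_zero _)).2 <|
    Or.inr (by linarith [neg_one_lt_chiFour_div p, chiFourDiv_apply p])
end
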